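/- Let d ≥ 2 and n ≥ d, and let μ be a σ-finite Borel measure on ℝ^d that assigns measure zero to every affine hyperplane (i.e., to every (d−1)-dimensional affine subspace). Then the set of tuples (y_1,…,y_n) ∈ (ℝ^d)^n that fail condition (B1) is a null set for the n-fold product measure μ^{⊗n}. Consequently, if Y_1,…,Y_n are random vectors in ℝ^d whose joint law on (ℝ^d)^n is absolutely continuous with respect to μ^{⊗n}, then Y_1,…,Y_n satisfy (B1) almost surely (and, if n ≥ d+1, they satisfy (A1) almost surely). -/

import Mathlib

open scoped RealInnerProductSpace BigOperators Pointwise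

noncomputable section

/-- The unsigned Stirling numbers of the first kind `⎡n,k⎤`, defined as the coefficients of
the polynomial identity `t (t+1) ⋯ (t+n-1) = ∑ k, ⎡n,k⎤ t^k`. -/
def stirlingFirst (n k : ℕ) : ℕ :=
  (∏ i ∈ Finset.range n, (Polynomial.X + Polynomial.C i : Polynomial ℕ)).coeff k

/-- The B-analogues `B[n,k]` of the Stirling numbers of the first kind, defined as the
coefficients of `(t+1)(t+3)⋯(t+2n-1) = ∑ k, B[n,k] t^k`. -/
def stirlingFirstB (n k : ℕ) : ℕ :=
  (∏ i ∈ Finset.range n, (Polynomial.X + Polynomial.C (2 * i + 1) : Polynomial ℕ)).coeff k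

/-- `D^A(n,d) = 2(⎡n, n-d+1⎤ + ⎡n, n-d+3⎤ + ⋯)`. -/
def DA (n d : ℕ) : ℕ := 2 * ∑ j ∈ Finset.range d, stirlingFirst n (n - d + 1 + 2 * j)

/-- `D^B(n,d) = 2(B[n, n-d+1] + B[n, n-d+3] + ⋯)`. -/
def DB (n d : ℕ) : ℕ := 2 * ∑ j ∈ Finset.range d, stirlingFirstB n (n - d + 1 + 2 * j)

/-- Stirling numbers of the second kind: the number of partitions of `{1,…,n}` into `k`
non-empty subsets. -/
def stirlingSecond (n k : ℕ) : ℕ :=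
  Set.ncard {P : Finset (Finset (Fin n)) |
    P.card = k ∧ (∀ s ∈ P, s.Nonempty) ∧ ∀ i : Fin n, ∃! s, s ∈ P ∧ i ∈ s}

/-- B-analogues of the Stirling numbers of the second kind:
`S_B(n,k) = ∑_{r=k}^n C(n,r) S(r,k) 2^{r-k}`. -/
def stirlingSecondB (n k : ℕ) : ℕ :=
  ∑ r ∈ Finset.Icc k n, Nat.choose n r * stirlingSecond r k * 2 ^ (r - k)

/-- The `i`-th of the `n-1` difference vectors `y_{σ(i)} - y_{σ(i+1)}` (0-indexed). -/
def diffA (d n : ℕ) (y : Fin n → EuclideanSpace ℝ (Fin d)) (σ : Equiv.Perm (Fin n))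
    (i : Fin (n - 1)) : EuclideanSpace ℝ (Fin d) :=
  y (σ ⟨i.val, by have := i.isLt; omega⟩) - y (σ ⟨i.val + 1, by have := i.isLt; omega⟩)

/-- Condition (A1): `n ≥ d+1` and for every permutation `σ`, any `d` of the vectors
`y_{σ(1)}-y_{σ(2)}, …, y_{σ(n-1)}-y_{σ(n)}` are linearly independent. -/
def CondA1 (d n : ℕ) (y : Fin n → EuclideanSpace ℝ (Fin d)) : Prop :=
  d + 1 ≤ n ∧
    ∀ σ : Equiv.Perm (Fin n), ∀ s : Finset (Fin (n - 1)), s.card = d →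
      LinearIndependent ℝ (fun i : s => diffA d n y σ i.1)

/-- A vector of signs `ε ∈ {±1}^n`. -/
def IsSignVec {n : ℕ} (ε : Fin n → ℝ) : Prop := ∀ i, ε i = 1 ∨ ε i = -1

/-- The `i`-th of the `n` vectors `ε_1 y_{σ(1)} - ε_2 y_{σ(2)}, …,
`ε_{n-1} y_{σ(n-1)} - ε_n y_{σ(n)}, ε_n y_{σ(n)}` (0-indexed). -/
def diffB (d n : ℕ) (y : Fin n → EuclideanSpace ℝ (Fin d)) (ε : Fin n → ℝ)
    (σ : Equiv.Perm (Fin n)) (i : Fin n) : EuclideanSpace ℝ (Fin d) :=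
  if h : i.val + 1 < n then
    ε i • y (σ i) - ε ⟨i.val + 1, h⟩ • y (σ ⟨i.val + 1, h⟩)
  else ε i • y (σ i)

/-- Condition (B1): `n ≥ d` and for every sign vector `ε` and permutation `σ`, any `d` of the
vectors `ε_1 y_{σ(1)}-ε_2 y_{σ(2)}, …, ε_{n-1}y_{σ(n-1)}-ε_n y_{σ(n)}, ε_n y_{σ(n)}` are
linearly independent. -/
def CondB1 (d n : ℕ) (y : Fin n → EuclideanSpace ℝ (Fin d)) : Prop :=
  d ≤ n ∧
    ∀ ε : Fin n → ℝ, IsSignVec ε → ∀ σ : Equiv.Perm (Fin n),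
      ∀ s : Finset (Fin n), s.card = d →
        LinearIndependent ℝ (fun i : s => diffB d n y ε σ i.1)

/-- The cone `D^A_σ = {v : ⟨v,y_{σ(1)}⟩ ≤ ⋯ ≤ ⟨v,y_{σ(n)}⟩}`. -/
def ConeA (d n : ℕ) (y : Fin n → EuclideanSpace ℝ (Fin d)) (σ : Equiv.Perm (Fin n)) :
    Set (EuclideanSpace ℝ (Fin d)) :=
  {v | Monotone fun i : Fin n => (⟪v, y (σ i)⟫)}

/-- The Weyl tessellation of type `A_{n-1}`: all cones `D^A_σ` different from `{0}`. -/
def WeylA (d n : ℕ) (y : Fin n → EuclideanSpace ℝ (Fin d)) :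
    Set (Set (EuclideanSpace ℝ (Fin d))) :=
  {C | (∃ σ, C = ConeA d n y σ) ∧ C ≠ {0}}

/-- The cone `D^B_{ε,σ} = {v : ε_1⟨v,y_{σ(1)}⟩ ≤ ⋯ ≤ ε_n⟨v,y_{σ(n)}⟩ ≤ 0}`. -/
def ConeB (d n : ℕ) (y : Fin n → EuclideanSpace ℝ (Fin d)) (ε : Fin n → ℝ)
    (σ : Equiv.Perm (Fin n)) : Set (EuclideanSpace ℝ (Fin d)) :=
  {v | (Monotone fun i : Fin n => ε i * ⟪v, y (σ i)⟫) ∧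
    ∀ i : Fin n, ε i * ⟪v, y (σ i)⟫ ≤ 0}

/-- The Weyl tessellation of type `B_n`: all cones `D^B_{ε,σ}` different from `{0}`. -/
def WeylB (d n : ℕ) (y : Fin n → EuclideanSpace ℝ (Fin d)) :
    Set (Set (EuclideanSpace ℝ (Fin d))) :=
  {C | (∃ ε σ, IsSignVec ε ∧ C = ConeB d n y ε σ) ∧ C ≠ {0}}

/-- The cone `F^A_σ(l_1,…,l_m)` (with the `l_j` being 1-indexed): within the chain
`⟨v,y_{σ(1)}⟩ ≤ ⋯ ≤ ⟨v,y_{σ(n)}⟩` the inequality at a 1-indexed position `i ∉ {l_1,…,l_m}`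
is replaced by an equality. -/
def FaceA (d n : ℕ) (y : Fin n → EuclideanSpace ℝ (Fin d)) (σ : Equiv.Perm (Fin n))
    (m : ℕ) (l : Fin m → ℕ) : Set (EuclideanSpace ℝ (Fin d)) :=
  {v | (Monotone fun i : Fin n => (⟪v, y (σ i)⟫)) ∧
    ∀ (p : ℕ) (hp : p + 1 < n), (∀ j, l j ≠ p + 1) →
      ⟪v, y (σ ⟨p, by omega⟩)⟫ = ⟪v, y (σ ⟨p + 1, hp⟩)⟫}

/-- Admissible break positions for type `A`: `1 ≤ l_1 < ⋯ < l_m ≤ n-1`. -/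
def ValidA (n m : ℕ) (l : Fin m → ℕ) : Prop :=
  StrictMono l ∧ ∀ j, 1 ≤ l j ∧ l j ≤ n - 1

/-- The set `𝓕^A_k(y_1,…,y_n)` of `k`-faces of the Weyl tessellation of type `A_{n-1}`:
all nonzero cones of the form `F^A_σ(l_1,…,l_{n-d+k-1})`. -/
def FacesA (d n k : ℕ) (y : Fin n → EuclideanSpace ℝ (Fin d)) :
    Set (Set (EuclideanSpace ℝ (Fin d))) :=
  {F | (∃ (σ : Equiv.Perm (Fin n)) (l : Fin (n - d + k - 1) → ℕ),
      ValidA n (n - d + k - 1) l ∧ F = FaceA d n y σ (n - d + k - 1) l) ∧ F ≠ {0}}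

/-- The cone `F^B_{ε,σ}(l_1,…,l_m)` (with the `l_j` being 1-indexed): within the chain
`ε_1⟨v,y_{σ(1)}⟩ ≤ ⋯ ≤ ε_n⟨v,y_{σ(n)}⟩ ≤ 0` the inequality at a 1-indexed position
`i ∉ {l_1,…,l_m}` is replaced by an equality; in particular all `⟨v,y_{σ(i)}⟩` with
`i > l_m` vanish. -/
def FaceB (d n : ℕ) (y : Fin n → EuclideanSpace ℝ (Fin d)) (ε : Fin n → ℝ)
    (σ : Equiv.Perm (Fin n)) (m : ℕ) (l : Fin m → ℕ) : Set (EuclideanSpace ℝ (Fin d)) :=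
  {v | (Monotone fun i : Fin n => ε i * ⟪v, y (σ i)⟫) ∧
    (∀ i : Fin n, ε i * ⟪v, y (σ i)⟫ ≤ 0) ∧
    (∀ (p : ℕ) (hp : p + 1 < n), (∀ j, l j ≠ p + 1) →
      ε ⟨p, by omega⟩ * ⟪v, y (σ ⟨p, by omega⟩)⟫ =
        ε ⟨p + 1, hp⟩ * ⟪v, y (σ ⟨p + 1, hp⟩)⟫) ∧
    (∀ (p : ℕ) (hp : p < n), (∀ j, l j ≤ p) → ⟪v, y (σ ⟨p, hp⟩)⟫ = 0)}

/-- Admissible break positions for type `B`: `1 ≤ l_1 < ⋯ < l_m ≤ n`. -/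
def ValidB (n m : ℕ) (l : Fin m → ℕ) : Prop :=
  StrictMono l ∧ ∀ j, 1 ≤ l j ∧ l j ≤ n

/-- The set `𝓕^B_k(y_1,…,y_n)` of `k`-faces of the Weyl tessellation of type `B_n`:
all nonzero cones of the form `F^B_{ε,σ}(l_1,…,l_{n-d+k})`. -/
def FacesB (d n k : ℕ) (y : Fin n → EuclideanSpace ℝ (Fin d)) :
    Set (Set (EuclideanSpace ℝ (Fin d))) :=
  {F | (∃ (ε : Fin n → ℝ) (σ : Equiv.Perm (Fin n)) (l : Fin (n - d + k) → ℕ),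
      IsSignVec ε ∧ ValidB n (n - d + k) l ∧ F = FaceB d n y ε σ (n - d + k) l) ∧ F ≠ {0}}

/-- The multiplicity `l_1!(l_2-l_1)!⋯(l_m-l_{m-1})!(n-l_m)!`. -/
def MultA (n m : ℕ) (l : Fin m → ℕ) : ℕ :=
  (∏ j : Fin m, Nat.factorial
      (l j - if _ : j.val = 0 then 0 else l ⟨j.val - 1, by have := j.isLt; omega⟩)) *
    (if h : 0 < m then Nat.factorial (n - l ⟨m - 1, by omega⟩) else Nat.factorial n)

/-- The multiplicity `l_1!(l_2-l_1)!⋯(l_m-l_{m-1})!(n-l_m)! 2^{n-l_m}`. -/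
def MultB (n m : ℕ) (l : Fin m → ℕ) : ℕ :=
  (∏ j : Fin m, Nat.factorial
      (l j - if _ : j.val = 0 then 0 else l ⟨j.val - 1, by have := j.isLt; omega⟩)) *
    (if h : 0 < m then Nat.factorial (n - l ⟨m - 1, by omega⟩) * 2 ^ (n - l ⟨m - 1, by omega⟩)
     else Nat.factorial n * 2 ^ n)

/-- The face `C^A_σ(l_1,…,l_m)` of a Weyl chamber of type `A_{n-1}` in `ℝ^n`. -/
def ChamberFaceA (n : ℕ) (σ : Equiv.Perm (Fin n)) (m : ℕ) (l : Fin m → ℕ) :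
    Set (EuclideanSpace ℝ (Fin n)) :=
  {β | (Monotone fun i : Fin n => β (σ i)) ∧
    ∀ (p : ℕ) (hp : p + 1 < n), (∀ j, l j ≠ p + 1) → β (σ ⟨p, by omega⟩) = β (σ ⟨p + 1, hp⟩)}

/-- The face `C^B_{ε,σ}(l_1,…,l_m)` of a Weyl chamber of type `B_n` in `ℝ^n`. -/
def ChamberFaceB (n : ℕ) (ε : Fin n → ℝ) (σ : Equiv.Perm (Fin n)) (m : ℕ) (l : Fin m → ℕ) :
    Set (EuclideanSpace ℝ (Fin n)) :=
  {β | (Monotone fun i : Fin n => ε i * β (σ i)) ∧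
    (∀ i : Fin n, ε i * β (σ i) ≤ 0) ∧
    (∀ (p : ℕ) (hp : p + 1 < n), (∀ j, l j ≠ p + 1) →
      ε ⟨p, by omega⟩ * β (σ ⟨p, by omega⟩) = ε ⟨p + 1, hp⟩ * β (σ ⟨p + 1, hp⟩)) ∧
    (∀ (p : ℕ) (hp : p < n), (∀ j, l j ≤ p) → β (σ ⟨p, hp⟩) = 0)}

/-- The linear subspace `L = {β ∈ ℝ^n : β_1 y_1 + ⋯ + β_n y_n = 0}`. -/
def Lspace (d n : ℕ) (y : Fin n → EuclideanSpace ℝ (Fin d)) :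
    Submodule ℝ (EuclideanSpace ℝ (Fin n)) where
  carrier := {β | ∑ i, β i • y i = 0}
  add_mem' := by
    intro a b ha hb
    simp only [Set.mem_setOf_eq] at *
    have h : ∀ i ∈ Finset.univ, (a + b) i • y i = a i • y i + b i • y i := by
      intro i _
      rw [PiLp.add_apply, add_smul]
    rw [Finset.sum_congr rfl h, Finset.sum_add_distrib, ha, hb, add_zero]
  zero_mem' := by
    simp only [Set.mem_setOf_eq]
    refine Finset.sum_eq_zero fun i _ => ?_
    rw [PiLp.zero_apply, zero_smul]
  smul_mem' := by
    intro c a ha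
    simp only [Set.mem_setOf_eq] at *
    have h : ∀ i ∈ Finset.univ, (c • a) i • y i = c • (a i • y i) := by
      intro i _
      rw [PiLp.smul_apply, smul_smul, smul_eq_mul]
    rw [Finset.sum_congr rfl h, ← Finset.smul_sum, ha, smul_zero]

/-- The hyperplane `{β ∈ ℝ^N : β_i = β_j}`. -/
def hypEq (N : ℕ) (i j : Fin N) : Submodule ℝ (EuclideanSpace ℝ (Fin N)) where
  carrier := {β | β i = β j}
  add_mem' := by
    intro a b ha hb
    simp only [Set.mem_setOf_eq, PiLp.add_apply] at *
    rw [ha, hb]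
  zero_mem' := by simp [Set.mem_setOf_eq]
  smul_mem' := by
    intro c a ha
    simp only [Set.mem_setOf_eq, PiLp.smul_apply] at *
    rw [ha]

/-- The hyperplane `{β ∈ ℝ^N : β_i = -β_j}`. -/
def hypOpp (N : ℕ) (i j : Fin N) : Submodule ℝ (EuclideanSpace ℝ (Fin N)) where
  carrier := {β | β i = -β j}
  add_mem' := by
    intro a b ha hb
    simp only [Set.mem_setOf_eq, PiLp.add_apply] at *
    rw [ha, hb, neg_add]
  zero_mem' := by simp [Set.mem_setOf_eq]
  smul_mem' := by
    intro c a ha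
    simp only [Set.mem_setOf_eq, PiLp.smul_apply] at *
    rw [ha, smul_neg]

/-- The hyperplane `{β ∈ ℝ^N : β_i = 0}`. -/
def hypZero (N : ℕ) (i : Fin N) : Submodule ℝ (EuclideanSpace ℝ (Fin N)) where
  carrier := {β | β i = 0}
  add_mem' := by
    intro a b ha hb
    simp only [Set.mem_setOf_eq, PiLp.add_apply] at *
    rw [ha, hb, add_zero]
  zero_mem' := by simp [Set.mem_setOf_eq]
  smul_mem' := by
    intro c a ha
    simp only [Set.mem_setOf_eq, PiLp.smul_apply] at *
    rw [ha, smul_zero]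

/-- The reflection arrangement `𝒜(A_{N-1})` in `ℝ^N`. -/
def ArrA (N : ℕ) : Set (Submodule ℝ (EuclideanSpace ℝ (Fin N))) :=
  {H | ∃ i j : Fin N, i < j ∧ H = hypEq N i j}

/-- The reflection arrangement `𝒜(B_N)` in `ℝ^N`. -/
def ArrB (N : ℕ) : Set (Submodule ℝ (EuclideanSpace ℝ (Fin N))) :=
  {H | (∃ i j : Fin N, i < j ∧ H = hypEq N i j) ∨
    (∃ i j : Fin N, i < j ∧ H = hypOpp N i j) ∨ ∃ i : Fin N, H = hypZero N i}

/-- Two linear subspaces `U`, `W` of `ℝ^N` are in general position if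
`dim (U ∩ W) = max {0, dim U + dim W - N}`. -/
def InGenPos (N : ℕ) (U W : Submodule ℝ (EuclideanSpace ℝ (Fin N))) : Prop :=
  Module.finrank ℝ ↥(U ⊓ W) = Module.finrank ℝ ↥U + Module.finrank ℝ ↥W - N

/-- A linear subspace `U` is in general position with respect to a hyperplane
arrangement `A` if it is in general position with respect to `⋂_{H ∈ B} H` for
every subset `B ⊆ A`. -/
def InGenPosArr (N : ℕ) (U : Submodule ℝ (EuclideanSpace ℝ (Fin N)))
    (A : Set (Submodule ℝ (EuclideanSpace ℝ (Fin N)))) : Prop :=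
  ∀ B ⊆ A, InGenPos N U (sInf B)

/-- The polyhedral cone `{v : ⟨x_1,v⟩ ≤ 0, …, ⟨x_m,v⟩ ≤ 0}`. -/
def PolyCone (d m : ℕ) (x : Fin m → EuclideanSpace ℝ (Fin d)) :
    Set (EuclideanSpace ℝ (Fin d)) :=
  {v | ∀ i, ⟪x i, v⟫ ≤ 0}

/-- The dual cone `C° = {v : ⟨x,v⟩ ≤ 0 ∀ x ∈ C}`. -/
def DualCone (d : ℕ) (C : Set (EuclideanSpace ℝ (Fin d))) :
    Set (EuclideanSpace ℝ (Fin d)) :=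
  {v | ∀ w ∈ C, ⟪w, v⟫ ≤ 0}

/-- The face of `D^B_{ε,σ}` obtained by replacing the inequalities at the (0-indexed)
positions in `E` by equalities. -/
def SubfaceB (d n : ℕ) (y : Fin n → EuclideanSpace ℝ (Fin d)) (ε : Fin n → ℝ)
    (σ : Equiv.Perm (Fin n)) (E : Set (Fin n)) : Set (EuclideanSpace ℝ (Fin d)) :=
  {v | v ∈ ConeB d n y ε σ ∧ ∀ i ∈ E,
    if h : (i : ℕ) + 1 < n then
      ε i * ⟪v, y (σ i)⟫ = ε ⟨(i : ℕ) + 1, h⟩ * ⟪v, y (σ ⟨(i : ℕ) + 1, h⟩)⟫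
    else ε i * ⟪v, y (σ i)⟫ = 0}

end

/-! Fix `ε`, `σ` and a set `s` of at most `d` indices, and add the indices of `s` one at a time,
smallest first. The smallest index `a` is the only one whose vector
`ε_a y_{σ(a)} - ε_{a+1} y_{σ(a+1)}` involves `y_{σ(a)}`, and it does so through `ε_a y_{σ(a)}`
with `ε_a ≠ 0`. So, the other coordinates being fixed, adding `a` destroys linear independence
only if `y_{σ(a)}` lies in an affine subspace of dimension `< d`, a `μ`-null set; Fubini in the
coordinate `y_{σ(a)}` makes this a null event. Only finitely many `(ε, σ, s)` occur, and (A1) is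
(B1) for `ε = 1` restricted to the first `n - 1` vectors. -/

open MeasureTheory Module Function

theorem Submodule.exists_le_finrank_add_one_eq {K V : Type*} [Field K] [AddCommGroup V]
    [Module K V] [FiniteDimensional K V] (W : Submodule K V) (hW : finrank K W < finrank K V) :
    ∃ H : Submodule K V, W ≤ H ∧ finrank K H + 1 = finrank K V := by
  obtain ⟨f, hf, hWf⟩ := W.exists_le_ker_of_lt_top (Submodule.lt_top_of_finrank_lt_finrank hW)
  exact ⟨LinearMap.ker f, hWf, Module.Dual.finrank_ker_add_one_of_ne_zero hf⟩

theorem MeasureTheory.Measure.pi_eq_zero_of_forall_update {δ : Type*} [Fintype δ]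
    [DecidableEq δ] {X : δ → Type*} [∀ i, MeasurableSpace (X i)] {μ : ∀ i, Measure (X i)}
    [∀ i, SigmaFinite (μ i)] {A : Set (∀ i, X i)} (hA : MeasurableSet A) (j : δ)
    (h : ∀ r, μ j {x | update r j x ∈ A} = 0) : Measure.pi μ A = 0 := by
  have hslice : ∫⋯∫⁻_{j}, A.indicator 1 ∂μ = ∫⋯∫⁻_{j}, 0 ∂μ := by
    ext r
    have hmeas : MeasurableSet {x | update r j x ∈ A} := measurable_update r hA
    simp only [lmarginal_singleton, Pi.zero_apply, lintegral_zero]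
    rw [← h r, ← lintegral_indicator_one hmeas]
    rfl
  rw [← lintegral_indicator_one hA,
    lintegral_eq_of_lmarginal_eq {j} (measurable_one.indicator hA) measurable_const hslice]
  exact lintegral_zero

section Hyperplanes

variable {E : Type*} [AddCommGroup E] [Module ℝ E] [MeasurableSpace E]

def NullOnAffineHyperplanes (μ : Measure E) : Prop :=
  ∀ s : AffineSubspace ℝ E, finrank ℝ s.direction = finrank ℝ E - 1 → μ s = 0

theorem NullOnAffineHyperplanes.measure_setOf_smul_add_mem [FiniteDimensional ℝ E]
    {μ : Measure E} (hμ : NullOnAffineHyperplanes μ) {W : Submodule ℝ E}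
    (hW : finrank ℝ W < finrank ℝ E) {c : ℝ} (hc : c ≠ 0) (b : E) : μ {x | c • x + b ∈ W} = 0 := by
  obtain ⟨H, hWH, hH⟩ := W.exists_le_finrank_add_one_eq hW
  refine measure_mono_null (fun x hx => ?_)
    (hμ (AffineSubspace.mk' (-(c⁻¹ • b)) H) (by rw [AffineSubspace.direction_mk']; omega))
  have hx' : x -ᵥ -(c⁻¹ • b) = c⁻¹ • (c • x + b) := by
    rw [vsub_eq_sub, smul_add, smul_smul, inv_mul_cancel₀ hc, one_smul, sub_neg_eq_add]
  exact AffineSubspace.mem_mk'.mpr (hx' ▸ hWH (W.smul_mem c⁻¹ hx))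

end Hyperplanes

theorem NullOnAffineHyperplanes.ae_linearIndepOn_insert {E ι κ : Type*} [NormedAddCommGroup E]
    [NormedSpace ℝ E] [FiniteDimensional ℝ E] [MeasurableSpace E] [BorelSpace E] [Fintype ι]
    [DecidableEq ι] [DecidableEq κ] {μ : Measure E} [SigmaFinite μ]
    (hμ : NullOnAffineHyperplanes μ) {F : (ι → E) → κ → E} (hF : ∀ k, Continuous fun y => F y k)
    {t : Finset κ} (ht : t.card < finrank ℝ E) (a : κ) (j : ι) {c : ℝ} (hc : c ≠ 0)
    (g : (ι → E) → E) (hFt : ∀ r x, ∀ k ∈ t, F (update r j x) k = F r k)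
    (hFa : ∀ r x, F (update r j x) a = c • x + g r) :
    ∀ᵐ y ∂Measure.pi (fun _ => μ),
      LinearIndepOn ℝ (F y) t → LinearIndepOn ℝ (F y) ↑(insert a t) := by
  have hopen (u : Set κ) [Finite u] : IsOpen {y : ι → E | LinearIndepOn ℝ (F y) u} :=
    isOpen_setOfPred_linearIndependent.preimage (continuous_pi fun k : u => hF k)
  classical
  rw [ae_iff]
  refine Measure.pi_eq_zero_of_forall_update ?_ j fun r => ?_
  · simp only [Classical.not_imp]
    exact (hopen t).measurableSet.inter (hopen _).measurableSet.compl
  have hrank : finrank ℝ (Submodule.span ℝ (F r '' t)) < finrank ℝ E := by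
    rw [← Finset.coe_image]
    exact (finrank_span_finset_le_card _).trans_lt (Finset.card_image_le.trans_lt ht)
  refine measure_mono_null (fun x hx => ?_) (hμ.measure_setOf_smul_add_mem hrank hc (g r))
  have hEq : Set.EqOn (F (update r j x)) (F r) t := hFt r x
  by_contra hspan
  refine hx fun hind => ?_
  rw [Finset.coe_insert]
  refine hind.insert ?_
  rwa [hEq.image_eq, hFa]

section TypeB

variable {d n : ℕ}

theorem continuous_diffB (ε : Fin n → ℝ) (σ : Equiv.Perm (Fin n)) (i : Fin n) :
    Continuous fun y : Fin n → EuclideanSpace ℝ (Fin d) => diffB d n y ε σ i := by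
  unfold diffB
  split_ifs <;> fun_prop

theorem diffB_update_of_lt (y : Fin n → EuclideanSpace ℝ (Fin d)) (ε : Fin n → ℝ)
    (σ : Equiv.Perm (Fin n)) (x : EuclideanSpace ℝ (Fin d)) {a i : Fin n} (h : a < i) :
    diffB d n (update y (σ a) x) ε σ i = diffB d n y ε σ i := by
  have hne (k : Fin n) (hk : a < k) : σ k ≠ σ a := σ.injective.ne hk.ne'
  unfold diffB
  split_ifs with hi
  · rw [update_of_ne (hne i h),
      update_of_ne (hne _ (show a.val < i.val + 1 by have := Fin.lt_def.1 h; omega))]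
  · rw [update_of_ne (hne i h)]

theorem diffB_update_self (y : Fin n → EuclideanSpace ℝ (Fin d)) (ε : Fin n → ℝ)
    (σ : Equiv.Perm (Fin n)) (x : EuclideanSpace ℝ (Fin d)) (a : Fin n) :
    diffB d n (update y (σ a) x) ε σ a = ε a • x + (diffB d n y ε σ a - ε a • y (σ a)) := by
  unfold diffB
  split_ifs with ha
  · rw [update_self, update_of_ne (σ.injective.ne (Fin.ne_of_gt (Fin.lt_def.2 (by simp))))]
    abel
  · rw [update_self]
    abel

theorem ae_linearIndepOn_diffB {μ : Measure (EuclideanSpace ℝ (Fin d))} [SigmaFinite μ]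
    (hμ : NullOnAffineHyperplanes μ) {ε : Fin n → ℝ} (hε : ∀ i, ε i ≠ 0)
    (σ : Equiv.Perm (Fin n)) {s : Finset (Fin n)} (hs : s.card ≤ d) :
    ∀ᵐ y ∂Measure.pi (fun _ => μ), LinearIndepOn ℝ (diffB d n y ε σ) s := by
  induction s using Finset.induction_on_min with
  | empty => exact ae_of_all _ fun _ => by rw [Finset.coe_empty]; exact linearIndepOn_empty _ _
  | insert a s has ih =>
    have ha : a ∉ s := fun h => lt_irrefl a (has a h)
    rw [Finset.card_insert_of_notMem ha] at hs
    have hrank : s.card < finrank ℝ (EuclideanSpace ℝ (Fin d)) := by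
      rw [finrank_euclideanSpace_fin]; omega
    filter_upwards [ih (by omega), hμ.ae_linearIndepOn_insert (continuous_diffB ε σ) hrank a
      (σ a) (hε a) _ (fun r x k hk => diffB_update_of_lt r ε σ x (has k hk))
      (fun r x => diffB_update_self r ε σ x a)] with y hs hins
    exact hins hs

theorem diffB_one_castLE (y : Fin n → EuclideanSpace ℝ (Fin d)) (σ : Equiv.Perm (Fin n))
    (i : Fin (n - 1)) : diffB d n y 1 σ (Fin.castLE (Nat.sub_le n 1) i) = diffA d n y σ i := by
  have hi : (Fin.castLE (Nat.sub_le n 1) i).val + 1 < n := by simp only [Fin.val_castLE]; omega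
  simp only [diffB, dif_pos hi, Pi.one_apply, one_smul, diffA]
  rfl

theorem CondB1.condA1 {y : Fin n → EuclideanSpace ℝ (Fin d)} (hB : CondB1 d n y)
    (hn : d + 1 ≤ n) : CondA1 d n y := by
  refine ⟨hn, fun σ s hs => ?_⟩
  have hind : LinearIndepOn ℝ (diffB d n y 1 σ) ↑(s.map (Fin.castLEEmb (Nat.sub_le n 1))) :=
    hB.2 1 (fun _ => Or.inl rfl) σ _ (by rw [Finset.card_map, hs])
  rw [Finset.coe_map] at hind
  exact (hind.comp_of_image (Fin.castLEEmb _).injective.injOn).congr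
    fun i _ => diffB_one_castLE y σ i

end TypeB

open MeasureTheory in
theorem general_position_almost_surely_general (d n : ℕ) (hn : d ≤ n)
    (μ : Measure (EuclideanSpace ℝ (Fin d))) [SigmaFinite μ]
    (hμ : ∀ s : AffineSubspace ℝ (EuclideanSpace ℝ (Fin d)),
      Module.finrank ℝ s.direction = d - 1 → μ ↑s = 0) :
    Measure.pi (fun _ : Fin n => μ)
        {y : Fin n → EuclideanSpace ℝ (Fin d) | ¬CondB1 d n y} = 0 ∧
      ∀ (Ω : Type) (_ : MeasurableSpace Ω) (P : Measure Ω),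
        IsProbabilityMeasure P →
        ∀ Y : Ω → Fin n → EuclideanSpace ℝ (Fin d), Measurable Y →
        Measure.map Y P ≪ Measure.pi (fun _ : Fin n => μ) →
        (∀ᵐ ω ∂P, CondB1 d n (Y ω)) ∧ (d + 1 ≤ n → ∀ᵐ ω ∂P, CondA1 d n (Y ω)) := by
  have hμ' : NullOnAffineHyperplanes μ := fun s hs =>
    hμ s (by rwa [finrank_euclideanSpace_fin] at hs)
  have hsigns : {ε : Fin n → ℝ | IsSignVec ε}.Countable :=
    ((Set.Finite.pi fun _ => Set.toFinite {1, -1}).subset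
      fun ε (hε : IsSignVec ε) i _ => hε i).countable
  have hB1 : ∀ᵐ y ∂Measure.pi (fun _ : Fin n => μ), CondB1 d n y := by
    have hall : ∀ᵐ y ∂Measure.pi (fun _ : Fin n => μ), ∀ ε ∈ {ε : Fin n → ℝ | IsSignVec ε},
        ∀ σ : Equiv.Perm (Fin n), ∀ s : Finset (Fin n), s.card = d →
          LinearIndepOn ℝ (diffB d n y ε σ) s :=
      (ae_ball_iff hsigns).2 fun ε hε => ae_all_iff.2 fun σ => ae_all_iff.2 fun s =>
        Filter.eventually_imp_distrib_left.2 fun hs =>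
          ae_linearIndepOn_diffB hμ' (fun i => by rcases hε i with h | h <;> simp [h]) σ hs.le
    filter_upwards [hall] with y hy using ⟨hn, hy⟩
  refine ⟨ae_iff.1 hB1, fun Ω _ P _ Y hY habs => ?_⟩
  have hB1Y : ∀ᵐ ω ∂P, CondB1 d n (Y ω) := ae_of_ae_map hY.aemeasurable (habs.ae_le hB1)
  exact ⟨hB1Y, fun hn1 => hB1Y.mono fun ω h => h.condA1 hn1⟩

open MeasureTheory in
/-- Lemma 5.1: if `μ` is a σ-finite Borel measure assigning measure zero to every affine
hyperplane, then `μ^{⊗n}`-almost every tuple satisfies (B1); consequently random vectors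
whose joint law is absolutely continuous w.r.t. `μ^{⊗n}` satisfy (B1) a.s.
(and (A1) a.s. if `n ≥ d+1`). -/
theorem general_position_almost_surely (d n : ℕ) (hd : 2 ≤ d) (hn : d ≤ n)
    (μ : Measure (EuclideanSpace ℝ (Fin d))) [SigmaFinite μ]
    (hμ : ∀ s : AffineSubspace ℝ (EuclideanSpace ℝ (Fin d)),
      Module.finrank ℝ s.direction = d - 1 → μ ↑s = 0) :
    Measure.pi (fun _ : Fin n => μ)
        {y : Fin n → EuclideanSpace ℝ (Fin d) | ¬CondB1 d n y} = 0 ∧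
      ∀ (Ω : Type) (_ : MeasurableSpace Ω) (P : Measure Ω),
        IsProbabilityMeasure P →
        ∀ Y : Ω → Fin n → EuclideanSpace ℝ (Fin d), Measurable Y →
        Measure.map Y P ≪ Measure.pi (fun _ : Fin n => μ) →
        (∀ᵐ ω ∂P, CondB1 d n (Y ω)) ∧ (d + 1 ≤ n → ∀ᵐ ω ∂P, CondA1 d n (Y ω)) :=
  general_position_almost_surely_general d n hn μ hμ
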